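/- arXiv:patt-sol/9311003 — 3 statements merged into one kernel-verified Lean document; each statement's English description precedes it below -/
import Mathlib

section
/- For each fixed real τ ≠ 0, the map φ ↦ ∫_{ℝ} e^{iτ/p} φ(p) dp defines a tempered distribution in p, and the function τ ↦ ∫_{ℝ} e^{iτ/p} φ(p) dp is differentiable at every τ ≠ 0 with derivative ∫_{ℝ} (i/p) e^{iτ/p} φ(p) dp, where the integral converges absolutely for every Schwartz function φ. -/
open MeasureTheory Filter Topology Complex Set intervalIntegral


lemma ker_norm (t p : ℝ) : ‖Complex.exp (Complex.I * t / p)‖ = 1 := by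
  have : Complex.I * t / p = ((t / p : ℝ) : ℂ) * Complex.I := by push_cast; ring
  rw [this, Complex.norm_exp_ofReal_mul_I]

lemma ker_meas (t : ℝ) : Measurable (fun p : ℝ => Complex.exp (Complex.I * t / p)) := by
  apply Complex.measurable_exp.comp
  exact measurable_const.div Complex.measurable_ofReal

lemma inv_meas : Measurable (fun p : ℝ => Complex.I / p) :=
  measurable_const.div Complex.measurable_ofReal

lemma integrable1 (φ : SchwartzMap ℝ ℂ) (t : ℝ) :
    Integrable (fun p : ℝ => Complex.exp (Complex.I * t / p) * φ p) :=
  φ.integrable.bdd_mul (ker_meas t).aestronglyMeasurable (ae_of_all _ fun p => le_of_eq (ker_norm t p))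

lemma norm_Idiv (p : ℝ) : ‖Complex.I / (p : ℂ)‖ = |p|⁻¹ := by
  by_cases hp : p = 0
  · simp [hp]
  · rw [norm_div, Complex.norm_I, Complex.norm_real, Real.norm_eq_abs, one_div]

lemma hasDerivAt_ker (p : ℝ) (c : ℂ) (t : ℝ) :
    HasDerivAt (fun t' : ℝ => Complex.exp (Complex.I * t' / p) * c)
      (Complex.I / p * Complex.exp (Complex.I * t / p) * c) t := by
  have key : ∀ t' : ℝ, Complex.I * t' / p = Complex.I / p * t' := fun _ => by ring
  simp only [key]
  have h := ((Complex.ofRealCLM.hasDerivAt (x := t)).const_mul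
    (Complex.I / (p : ℂ))).cexp.mul_const c
  refine h.congr_deriv ?_
  simp only [Complex.ofRealCLM_apply, Complex.ofReal_one, mul_one]
  ring

lemma ker_norm' (t q : ℝ) : ‖Complex.exp (Complex.I * t * q)‖ = 1 := by
  have : Complex.I * t * q = ((t * q : ℝ) : ℂ) * Complex.I := by push_cast; ring
  rw [this, Complex.norm_exp_ofReal_mul_I]

lemma hasDerivAt_cexp_c (c : ℂ) (z : ℂ) :
    HasDerivAt (fun z : ℂ => Complex.exp (c * z)) (c * Complex.exp (c * z)) z := by
  have h := ((hasDerivAt_id z).const_mul c).cexp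
  simpa [mul_comm] using h

lemma hasDerivAt_exp_itq (t q : ℝ) :
    HasDerivAt (fun q : ℝ => Complex.exp (Complex.I * t * q))
      (Complex.I * t * Complex.exp (Complex.I * t * q)) q :=
  (hasDerivAt_cexp_c (Complex.I * t) q).comp_ofReal

lemma hasDerivAt_w {t q : ℝ} (ht : t ≠ 0) (hq : q ≠ 0) :
    HasDerivAt (fun q : ℝ => Complex.exp (Complex.I * t * q) / (t * q))
      (Complex.I / q * Complex.exp (Complex.I * t * q)
        - (1 / t) * (Complex.exp (Complex.I * t * q) / q ^ 2)) q := by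
  have htc : ((t : ℂ)) ≠ 0 := Complex.ofReal_ne_zero.2 ht
  have hqc : ((q : ℂ)) ≠ 0 := Complex.ofReal_ne_zero.2 hq
  have hd : HasDerivAt (fun z : ℂ => (t : ℂ) * z) ((t : ℂ) * 1) (q : ℂ) :=
    (hasDerivAt_id _).const_mul _
  have hz := ((hasDerivAt_cexp_c (Complex.I * t) (q : ℂ)).div hd
    (mul_ne_zero htc hqc)).comp_ofReal
  refine hz.congr_deriv ?_
  have hI : (Complex.I) ≠ 0 := Complex.I_ne_zero
  field_simp

lemma contOn_aux1 {s : Set ℝ} (hs : ∀ x ∈ s, x ≠ 0) (t : ℝ) :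
    ContinuousOn (fun q : ℝ => Complex.I / q * Complex.exp (Complex.I * t * q)) s := by
  apply ContinuousOn.mul
  · exact continuousOn_const.div (Complex.continuous_ofReal.continuousOn)
      (fun x hx => Complex.ofReal_ne_zero.2 (hs x hx))
  · exact (Complex.continuous_exp.comp (by continuity)).continuousOn

lemma contOn_aux2 {s : Set ℝ} (hs : ∀ x ∈ s, x ≠ 0) (t : ℝ) :
    ContinuousOn (fun q : ℝ => Complex.exp (Complex.I * t * q) / (q : ℂ) ^ 2) s := by
  apply ContinuousOn.div
  · exact (Complex.continuous_exp.comp (by continuity)).continuousOn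
  · exact (Complex.continuous_ofReal.pow 2).continuousOn
  · exact fun x hx => pow_ne_zero _ (Complex.ofReal_ne_zero.2 (hs x hx))

lemma ne_zero_of_mem_uIcc {R x : ℝ} (hR : 1 ≤ R) (hx : x ∈ Set.uIcc 1 R) : x ≠ 0 := by
  rw [Set.uIcc_of_le hR] at hx
  exact ne_of_gt (lt_of_lt_of_le one_pos hx.1)

lemma ibp {t : ℝ} (ht : t ≠ 0) {R : ℝ} (hR : 1 ≤ R) :
    ∫ q in (1:ℝ)..R, Complex.I / q * Complex.exp (Complex.I * t * q)
      = Complex.exp (Complex.I * t * R) / (t * R) - Complex.exp (Complex.I * t) / t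
        + (1 / t) * ∫ q in (1:ℝ)..R, Complex.exp (Complex.I * t * q) / (q : ℂ) ^ 2 := by
  have hint1 : IntervalIntegrable (fun q : ℝ => Complex.I / q * Complex.exp (Complex.I * t * q))
      volume 1 R := (contOn_aux1 (fun x hx => ne_zero_of_mem_uIcc hR hx) t).intervalIntegrable
  have hint2 : IntervalIntegrable (fun q : ℝ => Complex.exp (Complex.I * t * q) / (q : ℂ) ^ 2)
      volume 1 R := (contOn_aux2 (fun x hx => ne_zero_of_mem_uIcc hR hx) t).intervalIntegrable
  have key := intervalIntegral.integral_eq_sub_of_hasDerivAt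
    (f := fun q : ℝ => Complex.exp (Complex.I * t * q) / (t * q))
    (f' := fun q : ℝ => Complex.I / q * Complex.exp (Complex.I * t * q)
        - (1 / t) * (Complex.exp (Complex.I * t * q) / (q : ℂ) ^ 2))
    (fun x hx => hasDerivAt_w ht (ne_zero_of_mem_uIcc hR hx))
    (hint1.sub (hint2.const_mul _))
  rw [intervalIntegral.integral_sub hint1 (hint2.const_mul _),
    intervalIntegral.integral_const_mul] at key
  have : Complex.exp (Complex.I * t) / t = Complex.exp (Complex.I * t * 1) / (t * 1) := by
    norm_num
  rw [this]
  push_cast at key ⊢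
  linear_combination key

lemma tail_meas (t : ℝ) :
    Measurable (fun q : ℝ => Complex.exp (Complex.I * t * q) / (q : ℂ) ^ 2) := by
  apply Measurable.div
  · exact Complex.measurable_exp.comp (measurable_const.mul Complex.measurable_ofReal)
  · exact Complex.measurable_ofReal.pow_const 2

lemma integrableOn_tail (t : ℝ) {R : ℝ} (hR : 0 < R) :
    IntegrableOn (fun q : ℝ => Complex.exp (Complex.I * t * q) / (q : ℂ) ^ 2) (Set.Ioi R) := by
  refine Integrable.mono' (integrableOn_Ioi_rpow_of_lt (by norm_num : (-2:ℝ) < -1) hR)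
    (tail_meas t).aestronglyMeasurable.restrict ?_
  refine (ae_restrict_iff' measurableSet_Ioi).2 (ae_of_all _ fun q hq => ?_)
  have hq0 : 0 < q := lt_trans hR hq
  rw [norm_div, ker_norm', norm_pow, Complex.norm_real, Real.norm_eq_abs, abs_of_pos hq0,
    Real.rpow_neg hq0.le]
  rw [one_div, show ((2:ℝ)) = ((2:ℕ):ℝ) by norm_num, Real.rpow_natCast]

lemma tail_norm_le (t : ℝ) {R : ℝ} (hR : 1 ≤ R) :
    ‖∫ q in Set.Ioi R, Complex.exp (Complex.I * t * q) / (q : ℂ) ^ 2‖ ≤ R⁻¹ := by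
  have hR0 : 0 < R := lt_of_lt_of_le one_pos hR
  refine (MeasureTheory.norm_integral_le_integral_norm _).trans ?_
  have heq : ∫ q in Set.Ioi R, ‖Complex.exp (Complex.I * t * q) / (q : ℂ) ^ 2‖
      = ∫ q in Set.Ioi R, q ^ (-2 : ℝ) := by
    refine setIntegral_congr_fun measurableSet_Ioi fun q hq => ?_
    have hq0 : 0 < q := lt_of_lt_of_le hR0 (le_of_lt hq)
    rw [norm_div, ker_norm', norm_pow, Complex.norm_real, Real.norm_eq_abs, abs_of_pos hq0,
      Real.rpow_neg hq0.le, one_div, show ((2:ℝ)) = ((2:ℕ):ℝ) by norm_num, Real.rpow_natCast]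
  rw [heq, integral_Ioi_rpow_of_lt (by norm_num) hR0]
  rw [show (-2 : ℝ) + 1 = -1 by norm_num, Real.rpow_neg_one]
  rw [div_neg, neg_div, neg_neg, div_one]

noncomputable def Kfun (t : ℝ) : ℂ :=
  - Complex.exp (Complex.I * t) / t
    + (1 / t) * ∫ q in Set.Ioi (1 : ℝ), Complex.exp (Complex.I * t * q) / (q : ℂ) ^ 2

lemma Jdiff {t : ℝ} (ht : t ≠ 0) {R : ℝ} (hR : 1 ≤ R) :
    ‖(∫ q in (1:ℝ)..R, Complex.I / q * Complex.exp (Complex.I * t * q)) - Kfun t‖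
      ≤ 2 / (|t| * R) := by
  have hR0 : 0 < R := lt_of_lt_of_le one_pos hR
  have hsplit : ∫ q in Set.Ioi (1:ℝ), Complex.exp (Complex.I * t * q) / (q : ℂ) ^ 2
      = (∫ q in (1:ℝ)..R, Complex.exp (Complex.I * t * q) / (q : ℂ) ^ 2)
        + ∫ q in Set.Ioi R, Complex.exp (Complex.I * t * q) / (q : ℂ) ^ 2 := by
    rw [intervalIntegral.integral_of_le hR, ← setIntegral_union
      (Set.Ioc_disjoint_Ioi le_rfl) measurableSet_Ioi
      ((integrableOn_tail t one_pos).mono_set Set.Ioc_subset_Ioi_self) (integrableOn_tail t hR0),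
      Set.Ioc_union_Ioi_eq_Ioi hR]
  have key : (∫ q in (1:ℝ)..R, Complex.I / q * Complex.exp (Complex.I * t * q)) - Kfun t
      = Complex.exp (Complex.I * t * R) / (t * R)
        - (1 / t) * ∫ q in Set.Ioi R, Complex.exp (Complex.I * t * q) / (q : ℂ) ^ 2 := by
    rw [ibp ht hR, Kfun, hsplit]; ring
  rw [key]
  have htR : ‖Complex.exp (Complex.I * t * R) / (t * R)‖ = 1 / (|t| * R) := by
    rw [norm_div, ker_norm']
    have : ((t : ℂ)) * R = ((t * R : ℝ) : ℂ) := by push_cast; ring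
    rw [this, Complex.norm_real, Real.norm_eq_abs, abs_mul, abs_of_pos hR0]
  refine (norm_sub_le _ _).trans ?_
  rw [htR, norm_mul]
  have h2 : ‖(1 : ℂ) / t‖ * ‖∫ q in Set.Ioi R, Complex.exp (Complex.I * t * q) / (q : ℂ) ^ 2‖
      ≤ (1 / |t|) * R⁻¹ := by
    have : ‖(1 : ℂ) / (t : ℂ)‖ = 1 / |t| := by
      rw [norm_div, norm_one, Complex.norm_real, Real.norm_eq_abs]
    rw [this]
    exact mul_le_mul_of_nonneg_left (tail_norm_le t hR) (by positivity)
  have habs : 0 < |t| := abs_pos.2 ht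
  calc 1 / (|t| * R) + ‖(1:ℂ)/t‖ * ‖_‖ ≤ 1 / (|t| * R) + (1/|t|) * R⁻¹ := by linarith [h2]
    _ = 2 / (|t| * R) := by field_simp; ring

lemma measSet (ε : ℝ) : MeasurableSet {p : ℝ | ε ≤ |p|} :=
  (isClosed_le continuous_const _root_.continuous_abs).measurableSet

lemma norm_integrand_le (φ : SchwartzMap ℝ ℂ) (t : ℝ) {ε p : ℝ} (hε : 0 < ε) (hp : ε ≤ |p|) :
    ‖Complex.I / p * Complex.exp (Complex.I * t / p) * φ p‖ ≤ ‖φ p‖ / ε := by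
  rw [norm_mul, norm_mul, ker_norm, mul_one, norm_Idiv, div_eq_inv_mul]
  have h1 : |p|⁻¹ ≤ ε⁻¹ := inv_anti₀ hε hp
  exact mul_le_mul_of_nonneg_right h1 (norm_nonneg _)

lemma integrableOn_G (φ : SchwartzMap ℝ ℂ) {ε : ℝ} (hε : 0 < ε) (t : ℝ) :
    IntegrableOn (fun p : ℝ => Complex.I / p * Complex.exp (Complex.I * t / p) * φ p)
      {p : ℝ | ε ≤ |p|} := by
  refine Integrable.mono' ((φ.integrable.norm.div_const ε).restrict) ?_ ?_
  · exact ((inv_meas.mul (ker_meas t)).mul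
      φ.continuous.measurable).aestronglyMeasurable.restrict
  · refine (ae_restrict_iff' (measSet ε)).2 (ae_of_all _ fun p hp => ?_)
    exact norm_integrand_le φ t hε hp

lemma hasDerivAt_Ftrunc (φ : SchwartzMap ℝ ℂ) {ε : ℝ} (hε : 0 < ε) (τ : ℝ) :
    HasDerivAt (fun t : ℝ => ∫ p in {p : ℝ | ε ≤ |p|}, Complex.exp (Complex.I * t / p) * φ p)
      (∫ p in {p : ℝ | ε ≤ |p|}, Complex.I / p * Complex.exp (Complex.I * τ / p) * φ p) τ := by
  have := hasDerivAt_integral_of_dominated_loc_of_deriv_le (μ := volume.restrict {p : ℝ | ε ≤ |p|})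
    (F := fun (t : ℝ) p => Complex.exp (Complex.I * t / p) * φ p)
    (F' := fun (t : ℝ) p => Complex.I / p * Complex.exp (Complex.I * t / p) * φ p)
    (x₀ := τ) (bound := fun p => ‖φ p‖ / ε) (Metric.ball_mem_nhds τ one_pos)
    (Eventually.of_forall fun t =>
      ((ker_meas t).mul φ.continuous.measurable).aestronglyMeasurable.restrict)
    ((integrable1 φ τ).restrict)
    (((inv_meas.mul (ker_meas τ)).mul φ.continuous.measurable).aestronglyMeasurable.restrict)
    ((ae_restrict_iff' (measSet ε)).2 (ae_of_all _ fun p hp t _ => norm_integrand_le φ t hε hp))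
    ((φ.integrable.norm.div_const ε).restrict)
    (ae_of_all _ fun p t _ => hasDerivAt_ker p (φ p) t)
  exact this.2

lemma tendsto_Ftrunc (φ : SchwartzMap ℝ ℂ) (τ : ℝ) :
    Tendsto (fun ε : ℝ => ∫ p in {p : ℝ | ε ≤ |p|}, Complex.exp (Complex.I * τ / p) * φ p)
      (𝓝[>] (0 : ℝ)) (𝓝 (∫ p : ℝ, Complex.exp (Complex.I * τ / p) * φ p)) := by
  set M : ℝ := (SchwartzMap.seminorm ℝ 0 0) φ with hM
  have hMnn : ∀ p : ℝ, ‖φ p‖ ≤ M := fun p => φ.norm_le_seminorm ℝ p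
  rw [← tendsto_sub_nhds_zero_iff]
  have key : ∀ ε : ℝ, 0 < ε →
      ‖(∫ p in {p : ℝ | ε ≤ |p|}, Complex.exp (Complex.I * τ / p) * φ p)
        - ∫ p : ℝ, Complex.exp (Complex.I * τ / p) * φ p‖ ≤ M * (2 * ε) := by
    intro ε hε
    have hsplit := integral_add_compl (measSet ε) (integrable1 φ τ)
    have hcompl : {p : ℝ | ε ≤ |p|}ᶜ = Metric.ball (0 : ℝ) ε := by
      ext p; simp [Metric.mem_ball, Real.dist_eq, not_le]
    rw [← hsplit]
    have : ∀ a b : ℂ, a - (a + b) = -b := fun a b => by ring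
    rw [this, norm_neg, hcompl]
    calc ‖∫ p in Metric.ball (0:ℝ) ε, Complex.exp (Complex.I * τ / p) * φ p‖
        ≤ M * (volume (Metric.ball (0:ℝ) ε)).toReal := by
          refine norm_setIntegral_le_of_norm_le_const measure_ball_lt_top ?_
          intro p _
          rw [norm_mul, ker_norm, one_mul]; exact hMnn p
      _ = M * (2 * ε) := by rw [Real.volume_ball, ENNReal.toReal_ofReal (by linarith)]
  have h0 : Tendsto (fun ε : ℝ => M * (2 * ε)) (𝓝[>] (0:ℝ)) (𝓝 0) := by
    have : Tendsto (fun ε : ℝ => M * (2 * ε)) (𝓝 (0:ℝ)) (𝓝 (M * (2 * 0))) :=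
      (continuous_const.mul (continuous_const.mul continuous_id)).tendsto 0
    simpa using this.mono_left nhdsWithin_le_nhds
  refine squeeze_zero_norm' ?_ h0
  filter_upwards [self_mem_nhdsWithin] with ε hε using key ε hε

-- substitution p ↦ 1/p on the positive side
lemma sub_inv (t : ℝ) {ε : ℝ} (hε : 0 < ε) (hε1 : ε ≤ 1) :
    ∫ p in ε..1, Complex.I / p * Complex.exp (Complex.I * t / p)
      = ∫ q in (1:ℝ)..(ε⁻¹), Complex.I / q * Complex.exp (Complex.I * t * q) := by
  have huIcc : Set.uIcc ε 1 = Set.Icc ε 1 := Set.uIcc_of_le hε1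
  have hne : ∀ x ∈ Set.uIcc ε 1, x ≠ 0 := by
    intro x hx; rw [huIcc] at hx; exact ne_of_gt (lt_of_lt_of_le hε hx.1)
  have key := intervalIntegral.integral_comp_smul_deriv'
    (f := fun p : ℝ => p⁻¹) (f' := fun p : ℝ => -(p ^ 2)⁻¹)
    (g := fun q : ℝ => -(Complex.I / q * Complex.exp (Complex.I * t * q)))
    (a := ε) (b := 1)
    (fun x hx => hasDerivAt_inv (hne x hx))
    (by
      apply ContinuousOn.neg
      exact (continuousOn_pow 2).inv₀ fun x hx => pow_ne_zero _ (hne x hx))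
    (by
      refine (contOn_aux1 (s := {x : ℝ | x ≠ 0}) (fun x hx => hx) t).neg.mono ?_
      rintro y ⟨x, hx, rfl⟩
      exact inv_ne_zero (hne x hx))
  have hlhs : ∫ p in ε..1, Complex.I / p * Complex.exp (Complex.I * t / p)
      = ∫ p in ε..1, (fun p : ℝ => -(p ^ 2)⁻¹) p •
          ((fun q : ℝ => -(Complex.I / q * Complex.exp (Complex.I * t * q))) ∘ fun p : ℝ => p⁻¹)
            p := by
    refine intervalIntegral.integral_congr fun x hx => ?_
    have hx0 : x ≠ 0 := hne x hx
    have hx0c : (x : ℂ) ≠ 0 := Complex.ofReal_ne_zero.2 hx0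
    simp only [Function.comp_apply, smul_neg, neg_smul, neg_neg]
    rw [Complex.real_smul]
    push_cast
    rw [div_eq_mul_inv (Complex.I * (t:ℂ)) (x:ℂ)]
    field_simp
  rw [hlhs, key]
  simp only [inv_one]
  rw [intervalIntegral.integral_symm 1 ε⁻¹, intervalIntegral.integral_neg, neg_neg]

lemma neg_side (t : ℝ) {ε : ℝ} (hε : 0 < ε) (hε1 : ε ≤ 1) :
    ∫ p in (-1:ℝ)..(-ε), Complex.I / p * Complex.exp (Complex.I * t / p)
      = - ∫ p in ε..1, Complex.I / p * Complex.exp (Complex.I * (-t) / p) := by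
  rw [← intervalIntegral.integral_comp_neg
    (fun p : ℝ => Complex.I / p * Complex.exp (Complex.I * t / p)) (a := ε) (b := 1)]
  rw [← intervalIntegral.integral_neg]
  refine intervalIntegral.integral_congr fun x hx => ?_
  push_cast
  rw [div_neg, div_neg, neg_mul, mul_neg, neg_div]

lemma contOn_ker {s : Set ℝ} (hs : ∀ x ∈ s, x ≠ 0) (t : ℝ) :
    ContinuousOn (fun p : ℝ => Complex.I / p * Complex.exp (Complex.I * t / p)) s := by
  apply ContinuousOn.mul
  · exact continuousOn_const.div (Complex.continuous_ofReal.continuousOn)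
      (fun x hx => Complex.ofReal_ne_zero.2 (hs x hx))
  · apply Complex.continuous_exp.comp_continuousOn
    exact continuousOn_const.div Complex.continuous_ofReal.continuousOn
      (fun x hx => Complex.ofReal_ne_zero.2 (hs x hx))

lemma set_decomp {ε : ℝ} (hε : 0 < ε) (hε1 : ε ≤ 1) :
    {p : ℝ | ε ≤ |p|} ∩ Set.Icc (-1 : ℝ) 1 = Set.Icc (-1 : ℝ) (-ε) ∪ Set.Icc ε 1 := by
  ext p
  simp only [Set.mem_inter_iff, Set.mem_setOf_eq, Set.mem_Icc, Set.mem_union, le_abs]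
  constructor
  · rintro ⟨h1 | h1, h2, h3⟩
    · exact Or.inr ⟨h1, h3⟩
    · exact Or.inl ⟨h2, by linarith⟩
  · rintro (⟨h1, h2⟩ | ⟨h1, h2⟩)
    · exact ⟨Or.inr (by linarith), h1, by linarith⟩
    · exact ⟨Or.inl h1, by linarith, h2⟩

lemma Ipart (t : ℝ) {ε : ℝ} (hε : 0 < ε) (hε1 : ε ≤ 1) :
    ∫ p in {p : ℝ | ε ≤ |p|} ∩ Set.Icc (-1 : ℝ) 1,
        Complex.I / p * Complex.exp (Complex.I * t / p)
      = (∫ q in (1:ℝ)..(ε⁻¹), Complex.I / q * Complex.exp (Complex.I * t * q))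
        - ∫ q in (1:ℝ)..(ε⁻¹), Complex.I / q * Complex.exp (Complex.I * (-t) * q) := by
  rw [set_decomp hε hε1]
  have hd : Disjoint (Set.Icc (-1 : ℝ) (-ε)) (Set.Icc ε 1) := by
    refine Set.disjoint_left.2 fun p hp hp' => ?_
    rcases hp with ⟨_, h2⟩; rcases hp' with ⟨h3, _⟩; linarith
  have hint1 : IntegrableOn (fun p : ℝ => Complex.I / p * Complex.exp (Complex.I * t / p))
      (Set.Icc (-1 : ℝ) (-ε)) := by
    refine (contOn_ker (fun x hx => ?_) t).integrableOn_compact isCompact_Icc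
    rcases hx with ⟨_, h2⟩; exact ne_of_lt (by linarith)
  have hint2 : IntegrableOn (fun p : ℝ => Complex.I / p * Complex.exp (Complex.I * t / p))
      (Set.Icc ε 1) := by
    refine (contOn_ker (fun x hx => ?_) t).integrableOn_compact isCompact_Icc
    rcases hx with ⟨h1, _⟩; exact ne_of_gt (by linarith)
  rw [setIntegral_union hd measurableSet_Icc hint1 hint2]
  have e1 : ∫ p in Set.Icc (-1 : ℝ) (-ε), Complex.I / p * Complex.exp (Complex.I * t / p)
      = ∫ p in (-1 : ℝ)..(-ε), Complex.I / p * Complex.exp (Complex.I * t / p) := by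
    rw [intervalIntegral.integral_of_le (by linarith), integral_Icc_eq_integral_Ioc]
  have e2 : ∫ p in Set.Icc ε 1, Complex.I / p * Complex.exp (Complex.I * t / p)
      = ∫ p in ε..1, Complex.I / p * Complex.exp (Complex.I * t / p) := by
    rw [intervalIntegral.integral_of_le hε1, integral_Icc_eq_integral_Ioc]
  have e3 := sub_inv (-t) hε hε1
  push_cast at e3
  rw [e1, e2, neg_side t hε hε1, sub_inv t hε hε1, e3]
  ring

lemma schwartz_lip (φ : SchwartzMap ℝ ℂ) (p : ℝ) :
    ‖φ p - φ 0‖ ≤ ((SchwartzMap.seminorm ℝ 0 1) φ) * |p| := by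
  set L : ℝ := (SchwartzMap.seminorm ℝ 0 1) φ with hLdef
  have hL0 : 0 ≤ L := apply_nonneg _ _
  have hbd : ∀ x : ℝ, ‖deriv (⇑φ) x‖ ≤ L := by
    intro x
    have h1 : ‖deriv (⇑φ) x‖ ≤ ‖iteratedFDeriv ℝ 1 (⇑φ) x‖ := by
      rw [← fderiv_apply_one_eq_deriv]
      have h2 := (iteratedFDeriv ℝ 1 (⇑φ) x).le_opNorm (fun _ => (1 : ℝ))
      simpa [iteratedFDeriv_one_apply] using h2
    exact h1.trans (φ.norm_iteratedFDeriv_le_seminorm ℝ 1 x)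
  have hlip : LipschitzWith ⟨L, hL0⟩ (⇑φ) := by
    refine lipschitzWith_of_nnnorm_deriv_le φ.differentiable fun x => ?_
    exact NNReal.coe_le_coe.1 (hbd x)
  have := hlip.dist_le_mul p 0
  rwa [dist_eq_norm, Real.dist_eq, sub_zero] at this

-- norm bound for the remainder integrand
lemma rbound (φ : SchwartzMap ℝ ℂ) (t p : ℝ) (hp : p ∈ Set.Icc (-1 : ℝ) 1) :
    ‖Complex.I / p * Complex.exp (Complex.I * t / p)
        * (φ p - Set.indicator (Set.Icc (-1 : ℝ) 1) (fun _ => φ 0) p)‖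
      ≤ (SchwartzMap.seminorm ℝ 0 1) φ := by
  set L : ℝ := (SchwartzMap.seminorm ℝ 0 1) φ
  have hL0 : 0 ≤ L := apply_nonneg _ _
  rw [Set.indicator_of_mem hp]
  rw [norm_mul, norm_mul, ker_norm, mul_one, norm_Idiv]
  calc |p|⁻¹ * ‖φ p - φ 0‖ ≤ |p|⁻¹ * (L * |p|) :=
        mul_le_mul_of_nonneg_left (schwartz_lip φ p) (inv_nonneg.2 (abs_nonneg p))
    _ = L * (|p|⁻¹ * |p|) := by ring
    _ ≤ L * 1 := by
        refine mul_le_mul_of_nonneg_left ?_ hL0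
        by_cases hp0 : p = 0
        · simp [hp0]
        · rw [inv_mul_cancel₀ (abs_ne_zero.2 hp0)]
    _ = L := mul_one L

lemma rbound' (φ : SchwartzMap ℝ ℂ) (t p : ℝ) :
    ‖Complex.I / p * Complex.exp (Complex.I * t / p)
        * (φ p - Set.indicator (Set.Icc (-1 : ℝ) 1) (fun _ => φ 0) p)‖
      ≤ Set.indicator (Set.Icc (-1 : ℝ) 1) (fun _ => (SchwartzMap.seminorm ℝ 0 1) φ) p
          + ‖φ p‖ := by
  by_cases hp : p ∈ Set.Icc (-1 : ℝ) 1
  · have h0 := (rbound φ t p hp).trans (le_add_of_nonneg_right (norm_nonneg (φ p)))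
    rw [Set.indicator_of_mem hp] at h0 ⊢
    rwa [Set.indicator_of_mem hp]
  · rw [Set.indicator_of_notMem hp, Set.indicator_of_notMem hp, sub_zero, zero_add]
    rw [norm_mul, norm_mul, ker_norm, mul_one, norm_Idiv]
    have h1 : (1 : ℝ) ≤ |p| := by
      simp only [Set.mem_Icc, not_and_or, not_le] at hp
      rcases hp with h | h
      · rw [le_abs]; right; linarith
      · rw [le_abs]; left; linarith
    calc |p|⁻¹ * ‖φ p‖ ≤ 1 * ‖φ p‖ := by
          refine mul_le_mul_of_nonneg_right ?_ (norm_nonneg _)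
          rw [inv_le_one_iff₀]; right; exact h1
      _ = ‖φ p‖ := one_mul _

lemma meas_rintegrand (φ : SchwartzMap ℝ ℂ) (t : ℝ) :
    Measurable (fun p : ℝ => Complex.I / p * Complex.exp (Complex.I * t / p)
        * (φ p - Set.indicator (Set.Icc (-1 : ℝ) 1) (fun _ => φ 0) p)) :=
  (inv_meas.mul (ker_meas t)).mul
    (φ.continuous.measurable.sub (measurable_const.indicator measurableSet_Icc))

lemma integrable_A (φ : SchwartzMap ℝ ℂ) (t : ℝ) :
    Integrable (fun p : ℝ => Complex.I / p * Complex.exp (Complex.I * t / p)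
        * (φ p - Set.indicator (Set.Icc (-1 : ℝ) 1) (fun _ => φ 0) p)) := by
  refine Integrable.mono' ?_ (meas_rintegrand φ t).aestronglyMeasurable
    (ae_of_all _ (rbound' φ t))
  refine Integrable.add ?_ φ.integrable.norm
  rw [integrable_indicator_iff measurableSet_Icc]
  exact integrableOn_const measure_Icc_lt_top.ne

lemma Adiff (φ : SchwartzMap ℝ ℂ) (t : ℝ) {ε : ℝ} (hε : 0 < ε) (hε1 : ε ≤ 1) :
    ‖(∫ p in {p : ℝ | ε ≤ |p|}, Complex.I / p * Complex.exp (Complex.I * t / p)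
        * (φ p - Set.indicator (Set.Icc (-1 : ℝ) 1) (fun _ => φ 0) p))
      - ∫ p : ℝ, Complex.I / p * Complex.exp (Complex.I * t / p)
        * (φ p - Set.indicator (Set.Icc (-1 : ℝ) 1) (fun _ => φ 0) p)‖
      ≤ (SchwartzMap.seminorm ℝ 0 1) φ * (2 * ε) := by
  rw [← integral_add_compl (measSet ε) (integrable_A φ t)]
  have hcompl : {p : ℝ | ε ≤ |p|}ᶜ = Metric.ball (0 : ℝ) ε := by
    ext p; simp [Metric.mem_ball, Real.dist_eq, not_le]
  have : ∀ a b : ℂ, a - (a + b) = -b := fun a b => by ring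
  rw [this, norm_neg, hcompl]
  calc ‖∫ p in Metric.ball (0:ℝ) ε, Complex.I / p * Complex.exp (Complex.I * t / p)
          * (φ p - Set.indicator (Set.Icc (-1 : ℝ) 1) (fun _ => φ 0) p)‖
      ≤ (SchwartzMap.seminorm ℝ 0 1) φ * (volume (Metric.ball (0:ℝ) ε)).toReal := by
        refine norm_setIntegral_le_of_norm_le_const measure_ball_lt_top ?_
        intro p hp
        rw [Metric.mem_ball, Real.dist_eq, sub_zero] at hp
        refine rbound φ t p ?_
        rw [Set.mem_Icc]
        constructor <;> [linarith [neg_abs_le p]; linarith [le_abs_self p]]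
    _ = (SchwartzMap.seminorm ℝ 0 1) φ * (2 * ε) := by
        rw [Real.volume_ball, ENNReal.toReal_ofReal (by linarith)]

lemma Gdecomp (φ : SchwartzMap ℝ ℂ) (t : ℝ) {ε : ℝ} (hε : 0 < ε) (hε1 : ε ≤ 1) :
    ∫ p in {p : ℝ | ε ≤ |p|}, Complex.I / p * Complex.exp (Complex.I * t / p) * φ p
      = (∫ p in {p : ℝ | ε ≤ |p|}, Complex.I / p * Complex.exp (Complex.I * t / p)
          * (φ p - Set.indicator (Set.Icc (-1 : ℝ) 1) (fun _ => φ 0) p))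
        + ((∫ q in (1:ℝ)..(ε⁻¹), Complex.I / q * Complex.exp (Complex.I * t * q))
            - ∫ q in (1:ℝ)..(ε⁻¹), Complex.I / q * Complex.exp (Complex.I * (-t) * q)) * φ 0 := by
  have hf1 : IntegrableOn (fun p : ℝ => Complex.I / p * Complex.exp (Complex.I * t / p)
      * (φ p - Set.indicator (Set.Icc (-1 : ℝ) 1) (fun _ => φ 0) p)) {p : ℝ | ε ≤ |p|} :=
    (integrable_A φ t).integrableOn
  have hfull := integrableOn_G φ hε t
  have hf2 : IntegrableOn (fun p : ℝ => Complex.I / p * Complex.exp (Complex.I * t / p)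
      * Set.indicator (Set.Icc (-1 : ℝ) 1) (fun _ => φ 0) p) {p : ℝ | ε ≤ |p|} := by
    refine (hfull.sub hf1).congr ?_
    exact ae_of_all _ fun p => by simp only [Pi.sub_apply]; ring
  have step1 : ∫ p in {p : ℝ | ε ≤ |p|}, Complex.I / p * Complex.exp (Complex.I * t / p) * φ p
      = (∫ p in {p : ℝ | ε ≤ |p|}, Complex.I / p * Complex.exp (Complex.I * t / p)
          * (φ p - Set.indicator (Set.Icc (-1 : ℝ) 1) (fun _ => φ 0) p))
        + ∫ p in {p : ℝ | ε ≤ |p|}, Complex.I / p * Complex.exp (Complex.I * t / p)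
          * Set.indicator (Set.Icc (-1 : ℝ) 1) (fun _ => φ 0) p := by
    rw [← integral_add hf1 hf2]
    refine setIntegral_congr_fun (measSet ε) fun p _ => ?_
    ring
  rw [step1]
  congr 1
  have heq : ∀ p : ℝ, Complex.I / p * Complex.exp (Complex.I * t / p)
      * Set.indicator (Set.Icc (-1 : ℝ) 1) (fun _ => φ 0) p
      = Set.indicator (Set.Icc (-1 : ℝ) 1)
          (fun p : ℝ => Complex.I / p * Complex.exp (Complex.I * t / p) * φ 0) p := by
    intro p
    by_cases hp : p ∈ Set.Icc (-1 : ℝ) 1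
    · rw [Set.indicator_of_mem hp, Set.indicator_of_mem hp]
    · rw [Set.indicator_of_notMem hp, Set.indicator_of_notMem hp, mul_zero]
  simp only [heq]
  rw [setIntegral_indicator measurableSet_Icc, MeasureTheory.integral_mul_const, Ipart t hε hε1]

lemma Gest (φ : SchwartzMap ℝ ℂ) {t : ℝ} (ht : t ≠ 0) {ε : ℝ} (hε : 0 < ε) (hε1 : ε ≤ 1) :
    ‖(∫ p in {p : ℝ | ε ≤ |p|}, Complex.I / p * Complex.exp (Complex.I * t / p) * φ p)
      - ((∫ p : ℝ, Complex.I / p * Complex.exp (Complex.I * t / p)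
            * (φ p - Set.indicator (Set.Icc (-1 : ℝ) 1) (fun _ => φ 0) p))
          + (Kfun t - Kfun (-t)) * φ 0)‖
      ≤ ((SchwartzMap.seminorm ℝ 0 1) φ * 2 + 4 * ‖φ 0‖ / |t|) * ε := by
  have hR : (1 : ℝ) ≤ ε⁻¹ := by
    rw [le_inv_comm₀ one_pos hε]; simpa using hε1
  have ht0 : 0 < |t| := abs_pos.2 ht
  have hJ1 := Jdiff ht hR
  have hJ2 := Jdiff (t := -t) (neg_ne_zero.2 ht) hR
  push_cast at hJ2
  rw [Gdecomp φ t hε hε1]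
  have key : ∀ a b c d e f : ℂ, a + (b - c) * f - (d + (e - Kfun (-t)) * f)
      = (a - d) + (((b - e) - (c - Kfun (-t))) * f) := fun a b c d e f => by ring
  rw [key]
  refine (norm_add_le _ _).trans ?_
  have h2 : ‖(((∫ q in (1:ℝ)..(ε⁻¹), Complex.I / q * Complex.exp (Complex.I * t * q)) - Kfun t)
      - ((∫ q in (1:ℝ)..(ε⁻¹), Complex.I / q * Complex.exp (Complex.I * (-t) * q)) - Kfun (-t)))
        * φ 0‖ ≤ (2 / (|t| * ε⁻¹) + 2 / (|t| * ε⁻¹)) * ‖φ 0‖ := by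
    rw [norm_mul]
    refine mul_le_mul_of_nonneg_right ?_ (norm_nonneg _)
    refine (norm_sub_le _ _).trans ?_
    rw [abs_neg] at hJ2
    exact add_le_add hJ1 hJ2
  refine (add_le_add (Adiff φ t hε hε1) h2).trans (le_of_eq ?_)
  have hεinv : 2 / (|t| * ε⁻¹) = 2 * ε / |t| := by
    field_simp
  rw [hεinv]
  field_simp
  ring

lemma part2 (τ : ℝ) : ∃ T : SchwartzMap ℝ ℂ →L[ℂ] ℂ,
    ∀ φ : SchwartzMap ℝ ℂ, T φ = ∫ p : ℝ, Complex.exp (Complex.I * τ / p) * φ p := by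
  refine ⟨SchwartzMap.mkCLMtoNormedSpace
      (fun φ => ∫ p : ℝ, Complex.exp (Complex.I * τ / p) * φ p)
      (fun f g => ?_) (fun a f => ?_) ?_, fun φ => rfl⟩
  · simp only [SchwartzMap.add_apply, mul_add]
    exact integral_add (integrable1 f τ) (integrable1 g τ)
  · simp only [SchwartzMap.smul_apply, smul_eq_mul, RingHom.id_apply]
    rw [← MeasureTheory.integral_const_mul]
    congr 1; ext p; ring
  · rcases (inferInstance : (volume : Measure ℝ).HasTemperateGrowth).exists_integrable with ⟨n, h⟩
    use Finset.Iic (n, 0), 2 ^ n * ∫ x : ℝ, (1 + ‖x‖) ^ (-(n : ℝ))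
    refine ⟨by positivity, fun f => ?_⟩
    have h0 : ‖∫ p : ℝ, Complex.exp (Complex.I * τ / p) * f p‖ ≤ ∫ p : ℝ, ‖f p‖ := by
      refine (MeasureTheory.norm_integral_le_integral_norm _).trans (le_of_eq ?_)
      congr 1; ext p; rw [norm_mul, ker_norm, one_mul]
    refine h0.trans ?_
    have h' : ∀ x : ℝ, ‖f x‖ ≤ (1 + ‖x‖) ^ (-(n : ℝ)) *
        (2 ^ n * ((Finset.Iic ((n : ℕ), (0 : ℕ))).sup (schwartzSeminormFamily ℂ ℝ ℂ) f)) := by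
      intro x
      rw [Real.rpow_neg (by positivity), ← div_eq_inv_mul, le_div_iff₀' (by positivity),
        Real.rpow_natCast]
      have h0 := SchwartzMap.one_add_le_sup_seminorm_apply (𝕜 := ℂ) (m := (n, 0)) le_rfl le_rfl f x
      simp at h0
      exact h0
    refine (integral_mono (by simpa using f.integrable_pow_mul volume 0) (h.mul_const _) h').trans
      (le_of_eq ?_)
    rw [MeasureTheory.integral_mul_const]
    ring

theorem part3 (φ : SchwartzMap ℝ ℂ) (τ : ℝ) (hτ : τ ≠ 0) : ∃ d : ℂ,
    Tendsto (fun ε : ℝ =>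
        ∫ p in {p : ℝ | ε ≤ |p|}, (Complex.I / p) * Complex.exp (Complex.I * τ / p) * φ p)
      (𝓝[>] (0 : ℝ)) (𝓝 d) ∧
    HasDerivAt (fun τ' : ℝ => ∫ p : ℝ, Complex.exp (Complex.I * τ' / p) * φ p) d τ := by
  have hL0 : 0 ≤ (SchwartzMap.seminorm ℝ 0 1) φ := apply_nonneg _ _
  set L : ℝ := (SchwartzMap.seminorm ℝ 0 1) φ with hLdef
  have habs : 0 < |τ| := abs_pos.2 hτ
  set δ : ℝ := |τ| / 2 with hδdef
  have hδ : 0 < δ := by positivity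
  set s : Set ℝ := {x : ℝ | δ < |x|} with hsdef
  have hs_open : IsOpen s := isOpen_lt continuous_const _root_.continuous_abs
  have hτs : τ ∈ s := by
    simp only [hsdef, Set.mem_setOf_eq, hδdef]; linarith
  have hxprop : ∀ x ∈ s, x ≠ 0 ∧ δ ≤ |x| := by
    intro x hx
    simp only [hsdef, Set.mem_setOf_eq] at hx
    exact ⟨fun h => by rw [h, abs_zero] at hx; linarith, le_of_lt hx⟩
  set d : ℝ → ℂ := fun x =>
    (∫ p : ℝ, Complex.I / p * Complex.exp (Complex.I * x / p)
        * (φ p - Set.indicator (Set.Icc (-1 : ℝ) 1) (fun _ => φ 0) p))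
      + (Kfun x - Kfun (-x)) * φ 0 with hddef
  have hunif : TendstoUniformlyOn
      (fun (ε : ℝ) (x : ℝ) =>
        ∫ p in {p : ℝ | ε ≤ |p|}, Complex.I / p * Complex.exp (Complex.I * x / p) * φ p)
      d (𝓝[>] (0 : ℝ)) s := by
    rw [Metric.tendstoUniformlyOn_iff]
    intro η hη
    set C : ℝ := L * 2 + 4 * ‖φ 0‖ / δ + 1 with hCdef
    have hC0 : 0 < C := by positivity
    have hmem : Set.Ioo (0 : ℝ) (min 1 (η / C)) ∈ 𝓝[>] (0 : ℝ) :=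
      Ioo_mem_nhdsGT_of_mem ⟨le_rfl, lt_min one_pos (div_pos hη hC0)⟩
    filter_upwards [hmem] with ε hε x hx
    obtain ⟨hx0, hδx⟩ := hxprop x hx
    have hε0 : 0 < ε := hε.1
    have hε1 : ε ≤ 1 := le_of_lt (lt_of_lt_of_le hε.2 (min_le_left _ _))
    rw [dist_eq_norm, norm_sub_rev]
    have hb := Gest φ hx0 hε0 hε1
    have hmid : ((SchwartzMap.seminorm ℝ 0 1) φ * 2 + 4 * ‖φ 0‖ / |x|) * ε ≤ C * ε := by
      refine mul_le_mul_of_nonneg_right ?_ (le_of_lt hε0)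
      rw [hCdef, hLdef]
      have : 4 * ‖φ 0‖ / |x| ≤ 4 * ‖φ 0‖ / δ :=
        div_le_div_of_nonneg_left (by positivity) hδ hδx
      linarith
    have hfin : C * ε < η := by
      have hεlt : ε < η / C := lt_of_lt_of_le hε.2 (min_le_right _ _)
      calc C * ε < C * (η / C) := mul_lt_mul_of_pos_left hεlt hC0
        _ = η := by field_simp
    exact lt_of_le_of_lt (hb.trans hmid) hfin
  refine ⟨d τ, hunif.tendsto_at hτs, ?_⟩
  refine hasDerivAt_of_tendstoUniformlyOn hs_open hunif ?_ (fun x _ => tendsto_Ftrunc φ x) hτs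
  filter_upwards [self_mem_nhdsWithin] with ε hε x _
  exact hasDerivAt_Ftrunc φ hε x

theorem stmt0 :
    (∀ (φ : SchwartzMap ℝ ℂ) (τ : ℝ),
      Integrable (fun p : ℝ => Complex.exp (Complex.I * τ / p) * φ p)) ∧
    (∀ τ : ℝ, τ ≠ 0 → ∃ T : SchwartzMap ℝ ℂ →L[ℂ] ℂ,
      ∀ φ : SchwartzMap ℝ ℂ, T φ = ∫ p : ℝ, Complex.exp (Complex.I * τ / p) * φ p) ∧
    (∀ (φ : SchwartzMap ℝ ℂ) (τ : ℝ), τ ≠ 0 → ∃ d : ℂ,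
      Tendsto (fun ε : ℝ =>
          ∫ p in {p : ℝ | ε ≤ |p|}, (Complex.I / p) * Complex.exp (Complex.I * τ / p) * φ p)
        (𝓝[>] (0 : ℝ)) (𝓝 d) ∧
      HasDerivAt (fun τ' : ℝ => ∫ p : ℝ, Complex.exp (Complex.I * τ' / p) * φ p) d τ) := by
  exact ⟨fun φ τ => integrable1 φ τ, fun τ _ => part2 τ, fun φ τ hτ => part3 φ τ hτ⟩
end

section
/- Let S = (R^σ_+)† R^{−σ}_− where R^σ_± are bounded operators on a Hilbert space satisfying R^σ_± (R^{−σ}_±)† = I, (R^{−σ}_±)† R^σ_± = I (for σ = ±) and R^σ_+ (R^σ_+)† = R^σ_− (R^σ_−)†. Then S is independent of σ, i.e. (R^+_+)† R^−_− = (R^−_+)† R^+_−, and S is unitary: S S† = I = S† S. -/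
open ContinuousLinearMap

theorem stmt9 {H : Type*} [NormedAddCommGroup H] [InnerProductSpace ℂ H] [CompleteSpace H]
    (R : Bool → Bool → (H →L[ℂ] H))
    (h1 : ∀ σ pm, (R σ pm).comp (adjoint (R (!σ) pm)) = 1)
    (h2 : ∀ σ pm, (adjoint (R (!σ) pm)).comp (R σ pm) = 1)
    (h3 : ∀ σ, (R σ true).comp (adjoint (R σ true)) = (R σ false).comp (adjoint (R σ false))) :
    (adjoint (R true true)).comp (R false false) = (adjoint (R false true)).comp (R true false) ∧
    ((adjoint (R true true)).comp (R false false)).comp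
        (adjoint ((adjoint (R true true)).comp (R false false))) = 1 ∧
    (adjoint ((adjoint (R true true)).comp (R false false))).comp
        ((adjoint (R true true)).comp (R false false)) = 1 := by
  simp only [← mul_def] at *
  have e1 : adjoint (R false true) * R true true = 1 := h2 true true
  have e2 : adjoint (R true false) * R false false = 1 := h2 false false
  have e3 : adjoint (R true true) * R false true = 1 := h2 false true
  have e4 : adjoint (R false false) * R true false = 1 := h2 true false
  refine ⟨?_, ?_, ?_⟩
  · calc adjoint (R true true) * R false false
        = (adjoint (R false true) * R true true) * adjoint (R true true) * R false false := by
          rw [e1]; noncomm_ring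
      _ = adjoint (R false true) * (R true true * adjoint (R true true)) * R false false := by noncomm_ring
      _ = adjoint (R false true) * (R true false * adjoint (R true false)) * R false false := by
          rw [h3 true]
      _ = adjoint (R false true) * R true false * (adjoint (R true false) * R false false) := by noncomm_ring
      _ = adjoint (R false true) * R true false := by rw [e2]; noncomm_ring
  · simp only [← star_eq_adjoint, star_mul, star_star]; simp only [star_eq_adjoint]
    calc adjoint (R true true) * R false false * (adjoint (R false false) * R true true)
        = adjoint (R true true) * (R false false * adjoint (R false false)) * R true true := by noncomm_ring
      _ = adjoint (R true true) * (R false true * adjoint (R false true)) * R true true := by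
          rw [← h3 false]
      _ = (adjoint (R true true) * R false true) * (adjoint (R false true) * R true true) := by noncomm_ring
      _ = 1 := by rw [e1, e3]; noncomm_ring
  · simp only [← star_eq_adjoint, star_mul, star_star]; simp only [star_eq_adjoint]
    calc adjoint (R false false) * R true true * (adjoint (R true true) * R false false)
        = adjoint (R false false) * (R true true * adjoint (R true true)) * R false false := by noncomm_ring
      _ = adjoint (R false false) * (R true false * adjoint (R true false)) * R false false := by
          rw [h3 true]
      _ = (adjoint (R false false) * R true false) * (adjoint (R true false) * R false false) := by noncomm_ring
      _ = 1 := by rw [e2, e4]; noncomm_ring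
end

section
/- For all real c ≠ 0 and b, ∫_0^∞ e^{icx − εx} J₀(b√x) dx → (i/c) e^{−i b²/(4c)} as ε → 0+, where J₀ is the Bessel function of the first kind of order 0; equivalently, for fixed t ≠ 0, p₂ ∈ ℝ and p₁ ≠ 0, with c = p₁ sgn(t)/12 and b = |p₂| |t|^{1/2}: sgn(t) ∫_0^∞ e^{i(p₁ sgn t/12 + i0)x} J₀(p₂ |xt|^{1/2}) dx = (12i/(p₁)) e^{−3it p₂²/p₁}. -/
open MeasureTheory Filter Topology

/-- The Bessel function of the first kind of order 0. -/
noncomputable def besselJ0 (z : ℝ) : ℝ :=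
  ∑' m : ℕ, (-1) ^ m * (z / 2) ^ (2 * m) / (Nat.factorial m) ^ 2

lemma re_neg_mul (s : ℂ) (x : ℝ) : (-(s * x)).re = -(s.re * x) := by
  simp [Complex.mul_re]

lemma integrableOn_pow_mul_exp {s : ℂ} (hs : 0 < s.re) (n : ℕ) :
    IntegrableOn (fun x : ℝ => (x : ℂ) ^ n * Complex.exp (-(s * x))) (Set.Ioi 0) := by
  have hg : IntegrableOn (fun x : ℝ => x ^ (n : ℝ) * Real.exp (-s.re * x ^ (1 : ℝ)))
      (Set.Ioi 0) :=
    integrableOn_rpow_mul_exp_neg_mul_rpow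
      (lt_of_lt_of_le neg_one_lt_zero (Nat.cast_nonneg n)) zero_lt_one hs
  refine hg.mono' (Continuous.aestronglyMeasurable (by continuity)).restrict ?_
  filter_upwards [ae_restrict_mem measurableSet_Ioi] with x hx
  have hx0 : (0 : ℝ) < x := hx
  simp only [norm_mul, norm_pow, Complex.norm_exp, Complex.norm_real, Real.norm_eq_abs]
  rw [abs_of_pos hx0, Real.rpow_natCast, Real.rpow_one, re_neg_mul, neg_mul]

lemma laplace_pow {s : ℂ} (hs : 0 < s.re) (n : ℕ) :
    ∫ x in Set.Ioi (0 : ℝ), (x : ℂ) ^ n * Complex.exp (-(s * x))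
      = (Nat.factorial n) / s ^ (n + 1) := by
  have hs0 : s ≠ 0 := fun h => by simp [h] at hs
  induction n with
  | zero =>
    have hder : ∀ x ∈ Set.Ioi (0:ℝ),
        HasDerivAt (fun x : ℝ => -Complex.exp (-(s * x)) / s)
          ((x : ℂ) ^ 0 * Complex.exp (-(s * x))) x := by
      intro x _
      have h1 : HasDerivAt (fun x : ℝ => -(s * x)) (-s) x := by
        have := ((Complex.ofRealCLM.hasDerivAt (x := x)).const_mul s).neg
        simp at this
        exact this
      have := (Complex.hasDerivAt_exp _).comp x h1
      refine ((this.neg).div_const s).congr_deriv ?_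
      field_simp
    have htend : Tendsto (fun x : ℝ => -Complex.exp (-(s * x)) / s) atTop (𝓝 0) := by
      rw [tendsto_zero_iff_norm_tendsto_zero]
      have heq : (fun x : ℝ => ‖-Complex.exp (-(s * x)) / s‖)
          = fun x : ℝ => Real.exp (-(s.re * x)) / ‖s‖ := by
        ext x
        rw [norm_div, norm_neg, Complex.norm_exp, re_neg_mul]
      rw [heq]
      have h2 : Tendsto (fun x : ℝ => -(s.re * x)) atTop atBot := by
        apply tendsto_neg_atBot_iff.mpr
        exact Tendsto.const_mul_atTop hs tendsto_id
      have := Real.tendsto_exp_atBot.comp h2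
      simpa using this.div_const ‖s‖
    have hcont : ContinuousWithinAt (fun x : ℝ => -Complex.exp (-(s * x)) / s)
        (Set.Ici 0) 0 := by
      apply Continuous.continuousWithinAt
      continuity
    rw [integral_Ioi_of_hasDerivAt_of_tendsto hcont hder
      (integrableOn_pow_mul_exp hs 0) htend]
    simp
    rw [neg_div, neg_neg, one_div]
  | succ n ih =>
    set F : ℝ → ℂ := fun x => -((x : ℂ) ^ (n + 1) * Complex.exp (-(s * x))) / s with hF
    have hder : ∀ x ∈ Set.Ioi (0:ℝ),
        HasDerivAt F
          ((x : ℂ) ^ (n + 1) * Complex.exp (-(s * x))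
            - ((n : ℂ) + 1) / s * ((x : ℂ) ^ n * Complex.exp (-(s * x)))) x := by
      intro x _
      have hx1 : HasDerivAt (fun x : ℝ => (x : ℂ) ^ (n + 1))
          (((n : ℂ) + 1) * (x : ℂ) ^ n) x := by
        have := (hasDerivAt_pow (n + 1) (x : ℂ)).comp x (Complex.ofRealCLM.hasDerivAt (x := x))
        simp [mul_comm] at this
        exact this.congr_deriv (mul_comm _ _)
      have h1 : HasDerivAt (fun x : ℝ => -(s * x)) (-s) x := by
        have := ((Complex.ofRealCLM.hasDerivAt (x := x)).const_mul s).neg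
        simp at this
        exact this
      have hx2 := (Complex.hasDerivAt_exp _).comp x h1
      have := ((hx1.mul hx2).neg).div_const s
      refine this.congr_deriv ?_
      simp only [Function.comp_apply]
      field_simp
      ring
    have htend : Tendsto F atTop (𝓝 0) := by
      rw [tendsto_zero_iff_norm_tendsto_zero]
      have heq : ∀ᶠ x : ℝ in atTop, ‖F x‖ = (s.re * x) ^ (n+1) * Real.exp (-(s.re * x)) / (s.re ^ (n+1) * ‖s‖) := by
        filter_upwards [eventually_gt_atTop 0] with x hx
        rw [hF]
        simp only [norm_div, norm_neg, norm_mul, norm_pow,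
          Complex.norm_exp, Complex.norm_real, Real.norm_eq_abs, re_neg_mul]
        rw [abs_of_pos hx, mul_pow]
        have h1 : s.re ≠ 0 := hs.ne'
        have h2 : ‖s‖ ≠ 0 := norm_ne_zero_iff.mpr hs0
        field_simp
      rw [tendsto_congr' heq]
      have h1 : Tendsto (fun x : ℝ => (s.re * x) ^ (n+1) * Real.exp (-(s.re * x))) atTop (𝓝 0) := by
        have h2 : Tendsto (fun x : ℝ => s.re * x) atTop atTop :=
          Tendsto.const_mul_atTop hs tendsto_id
        exact (Real.tendsto_pow_mul_exp_neg_atTop_nhds_zero (n+1)).comp h2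
      simpa using h1.div_const (s.re ^ (n+1) * ‖s‖)
    have hcont : ContinuousWithinAt F (Set.Ici 0) 0 := by
      apply Continuous.continuousWithinAt
      continuity
    have key := integral_Ioi_of_hasDerivAt_of_tendsto hcont hder
      (((integrableOn_pow_mul_exp hs (n+1)).sub
        ((integrableOn_pow_mul_exp hs n).const_mul _))) htend
    have hsplit : ∫ x in Set.Ioi (0:ℝ),
        ((x : ℂ) ^ (n + 1) * Complex.exp (-(s * x))
          - ((n : ℂ) + 1) / s * ((x : ℂ) ^ n * Complex.exp (-(s * x))))
        = (∫ x in Set.Ioi (0:ℝ), (x : ℂ) ^ (n + 1) * Complex.exp (-(s * x)))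
          - ((n : ℂ) + 1) / s * ∫ x in Set.Ioi (0:ℝ), (x : ℂ) ^ n * Complex.exp (-(s * x)) := by
      rw [integral_sub (integrableOn_pow_mul_exp hs (n+1))
        ((integrableOn_pow_mul_exp hs n).const_mul _), integral_const_mul]
    rw [hsplit, ih] at key
    have hF0 : F 0 = 0 := by simp [hF]
    rw [hF0, sub_zero] at key
    have hkey2 : (∫ x in Set.Ioi (0:ℝ), (x : ℂ) ^ (n + 1) * Complex.exp (-(s * x)))
        = ((n : ℂ) + 1) / s * ((Nat.factorial n) / s ^ (n + 1)) := by
      linear_combination key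
    rw [hkey2, Nat.factorial_succ]
    push_cast
    try rw [div_mul_div_comm, mul_comm s (s ^ (n+1)), ← pow_succ]
    try field_simp
    try ring

lemma laplace_besselJ0 {s : ℂ} (hs : 0 < s.re) (b : ℝ) :
    ∫ x in Set.Ioi (0 : ℝ), Complex.exp (-(s * x)) * (besselJ0 (b * Real.sqrt x) : ℂ)
      = 1 / s * Complex.exp (-((b : ℂ) ^ 2 / 4) / s) := by
  have hs0 : s ≠ 0 := fun h => by simp [h] at hs
  set F : ℕ → ℝ → ℂ := fun m x =>
    ((-1) ^ m * ((b : ℂ) ^ 2 / 4) ^ m / (Nat.factorial m : ℂ) ^ 2)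
      * ((x : ℂ) ^ m * Complex.exp (-(s * x))) with hFdef
  have hFint : ∀ m, IntegrableOn (F m) (Set.Ioi 0) := fun m =>
    (integrableOn_pow_mul_exp hs m).const_mul _
  have hpt : ∀ x ∈ Set.Ioi (0:ℝ),
      Complex.exp (-(s * x)) * (besselJ0 (b * Real.sqrt x) : ℂ) = ∑' m, F m x := by
    intro x hx
    have hx0 : (0:ℝ) ≤ x := le_of_lt hx
    rw [besselJ0, Complex.ofReal_tsum, ← tsum_mul_left]
    congr 1 with m
    rw [hFdef]
    push_cast
    have hsq : ((Real.sqrt x : ℝ) : ℂ) ^ 2 = (x : ℂ) := by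
      rw [← Complex.ofReal_pow, Real.sq_sqrt hx0]
    have h1 : ((b:ℂ) * ((Real.sqrt x : ℝ):ℂ) / 2) ^ (2*m) = ((b:ℂ)^2/4) ^ m * (x:ℂ)^m := by
      rw [pow_mul, ← mul_pow]
      congr 1
      rw [div_pow, mul_pow, hsq]
      ring
    rw [h1]
    ring
  rw [setIntegral_congr_fun measurableSet_Ioi hpt]
  have hnorm : ∀ m, (∫ x in Set.Ioi (0:ℝ), ‖F m x‖)
      = (b ^ 2 / 4) ^ m / (Nat.factorial m : ℝ) ^ 2
        * ((Nat.factorial m : ℝ) * (1 / s.re) ^ (m + 1)) := by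
    intro m
    have heq : ∀ x ∈ Set.Ioi (0:ℝ), ‖F m x‖
        = (b ^ 2 / 4) ^ m / (Nat.factorial m : ℝ) ^ 2
          * (x ^ m * Real.exp (-(s.re * x))) := by
      intro x hx
      have hx0 : (0:ℝ) < x := hx
      rw [hFdef]
      simp only [norm_mul, norm_div, norm_pow, norm_neg, norm_one, one_pow, one_mul,
        Complex.norm_exp, Complex.norm_real, Real.norm_eq_abs, Complex.norm_natCast,
        re_neg_mul]
      rw [abs_of_pos hx0]
      norm_num [sq_abs, Complex.norm_ofNat, map_div₀]
    rw [setIntegral_congr_fun measurableSet_Ioi heq, integral_const_mul]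
    congr 1
    have h := Real.integral_rpow_mul_exp_neg_mul_Ioi (a := (m:ℝ)+1) (r := s.re) (by positivity) hs
    rw [add_sub_cancel_right] at h
    simp_rw [Real.rpow_natCast] at h
    rw [h]
    rw [Real.Gamma_nat_eq_factorial,
      show ((m:ℝ)+1) = ((m+1 : ℕ) : ℝ) by push_cast; ring, Real.rpow_natCast]
    ring
  have hsum : Summable (fun m => ∫ x in Set.Ioi (0:ℝ), ‖F m x‖) := by
    apply Summable.congr ((Real.summable_pow_div_factorial (b^2/(4*s.re))).mul_left (1/s.re))
    intro m
    rw [hnorm m]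
    have hm : (Nat.factorial m : ℝ) ≠ 0 := Nat.cast_ne_zero.mpr (Nat.factorial_ne_zero m)
    have hr : s.re ≠ 0 := hs.ne'
    rw [div_pow (b^2)]
    field_simp
    ring_nf; rw [inv_pow, one_div, inv_pow]; field_simp
  rw [← integral_tsum_of_summable_integral_norm hFint hsum]
  have hterm : ∀ m : ℕ, (∫ x in Set.Ioi (0:ℝ), F m x)
      = 1 / s * ((-((b:ℂ)^2/4)/s) ^ m / (Nat.factorial m : ℂ)) := by
    intro m
    rw [hFdef]
    simp only []
    rw [integral_const_mul, laplace_pow hs m]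
    have hm : (Nat.factorial m : ℂ) ≠ 0 := Nat.cast_ne_zero.mpr (Nat.factorial_ne_zero m)
    rw [show (-((b:ℂ)^2/4)/s) = (-1) * (((b:ℂ)^2/4)/s) by ring, mul_pow, div_pow]
    field_simp
    ring_nf; rw [inv_pow, one_div, inv_pow]; field_simp
  rw [tsum_congr hterm, tsum_mul_left]
  congr 1
  rw [Complex.exp_eq_exp_ℂ, NormedSpace.exp_eq_tsum_div]

theorem stmt15 (c b : ℝ) (hc : c ≠ 0) :
    Tendsto (fun ε : ℝ =>
        ∫ x in Set.Ioi (0 : ℝ),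
          Complex.exp (Complex.I * c * x - ε * x) * besselJ0 (b * Real.sqrt x))
      (𝓝[>] (0 : ℝ))
      (𝓝 (Complex.I / c * Complex.exp (-Complex.I * b ^ 2 / (4 * c)))) := by
  have hcC : (c : ℂ) ≠ 0 := Complex.ofReal_ne_zero.mpr hc
  have hne0 : ((0:ℝ):ℂ) - Complex.I * c ≠ 0 := by
    simp only [Complex.ofReal_zero, zero_sub, neg_ne_zero]
    exact mul_ne_zero Complex.I_ne_zero hcC
  set G : ℝ → ℂ := fun ε =>
    1 / ((ε:ℂ) - Complex.I * c) * Complex.exp (-((b:ℂ)^2/4) / ((ε:ℂ) - Complex.I * c)) with hG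
  have hkey : ∀ᶠ ε : ℝ in 𝓝[>] (0:ℝ),
      (∫ x in Set.Ioi (0 : ℝ),
        Complex.exp (Complex.I * c * x - ε * x) * besselJ0 (b * Real.sqrt x)) = G ε := by
    filter_upwards [self_mem_nhdsWithin] with ε (hε : (0:ℝ) < ε)
    have hre : (0:ℝ) < ((ε:ℂ) - Complex.I * c).re := by
      simpa [Complex.sub_re, Complex.mul_re] using hε
    have harg : ∀ x : ℝ, Complex.I * c * x - ε * x = -((((ε:ℂ)) - Complex.I * c) * x) := by
      intro x; ring
    simp_rw [harg]
    exact laplace_besselJ0 hre b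
  have hdencont : Tendsto (fun ε : ℝ => (ε:ℂ) - Complex.I * c) (𝓝[>] 0)
      (𝓝 (((0:ℝ):ℂ) - Complex.I * c)) := by
    apply Tendsto.mono_left _ nhdsWithin_le_nhds
    exact Continuous.tendsto (by continuity) 0
  have hGlim : Tendsto G (𝓝[>] (0:ℝ)) (𝓝 (G 0)) := by
    rw [hG]
    apply Tendsto.mul
    · exact (tendsto_const_nhds.div hdencont hne0)
    · exact (Complex.continuous_exp.tendsto _).comp (tendsto_const_nhds.div hdencont hne0)
  have hval : G 0 = Complex.I / c * Complex.exp (-Complex.I * b ^ 2 / (4 * c)) := by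
    rw [hG]
    simp only [Complex.ofReal_zero, zero_sub]
    have hI : Complex.I * Complex.I = -1 := Complex.I_mul_I
    congr 1
    · rw [div_eq_div_iff (neg_ne_zero.mpr (mul_ne_zero Complex.I_ne_zero hcC)) hcC]
      linear_combination (c:ℂ) * hI
    · congr 1
      rw [div_eq_div_iff (neg_ne_zero.mpr (mul_ne_zero Complex.I_ne_zero hcC))
        (mul_ne_zero (by norm_num) hcC : (4:ℂ) * c ≠ 0)]
      linear_combination (-(b:ℂ)^2 * (c:ℂ)) * hI
  rw [← hval]
  exact hGlim.congr' (Filter.EventuallyEq.symm hkey)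
end
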